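/- arXiv:2110.12834 — 3 statements merged into one kernel-verified Lean document; each statement's English description precedes it below -/
import Mathlib

section
/- Let f : ℝ → ℝ be smooth and everywhere positive, and let F = log f. Then f·f⁗ − 4 f'·f''' + 3 (f'')² = f²·(F⁗ + 6 (F'')²). -/
open Real

/-- Fourth-order Hirota-to-logarithmic conversion: for smooth positive `f` and
`F = log f`, one has `f * f'''' - 4 f' * f''' + 3 (f'')^2 = f^2 * (F'''' + 6 (F'')^2)`. -/
theorem hirota_log_fourth_order (f : ℝ → ℝ) (hf : ContDiff ℝ (⊤ : ℕ∞) f)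
    (hpos : ∀ x, 0 < f x) :
    ∀ x : ℝ,
      f x * iteratedDeriv 4 f x - 4 * deriv f x * iteratedDeriv 3 f x
          + 3 * (iteratedDeriv 2 f x) ^ 2 =
        (f x) ^ 2 *
          (iteratedDeriv 4 (fun y => Real.log (f y)) x
            + 6 * (iteratedDeriv 2 (fun y => Real.log (f y)) x) ^ 2) := by
  intro x
  have hne : ∀ y, f y ≠ 0 := fun y => (hpos y).ne'
  have hD : ∀ n : ℕ, Differentiable ℝ (iteratedDeriv n f) := by
    intro n
    exact hf.differentiable_iteratedDeriv n (by exact_mod_cast ENat.coe_lt_top n)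
  have hd : ∀ (n : ℕ) (y : ℝ), HasDerivAt (iteratedDeriv n f) (iteratedDeriv (n+1) f y) y := by
    intro n y
    rw [iteratedDeriv_succ]
    exact ((hD n) y).hasDerivAt
  set a : ℝ → ℝ := f with ha
  set b : ℝ → ℝ := iteratedDeriv 1 f with hb
  set c : ℝ → ℝ := iteratedDeriv 2 f with hc
  set d : ℝ → ℝ := iteratedDeriv 3 f with hdd
  set e : ℝ → ℝ := iteratedDeriv 4 f with he
  have hda : ∀ y, HasDerivAt a (b y) y := by
    intro y
    have := hd 0 y
    rwa [iteratedDeriv_zero] at this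
  have hdb : ∀ y, HasDerivAt b (c y) y := hd 1
  have hdc : ∀ y, HasDerivAt c (d y) y := hd 2
  have hdd' : ∀ y, HasDerivAt d (e y) y := hd 3
  set F : ℝ → ℝ := fun y => Real.log (f y) with hF
  set g1 : ℝ → ℝ := fun y => b y / a y with hg1def
  set g2 : ℝ → ℝ := fun y => (c y * a y - b y * b y) / a y ^ 2 with hg2def
  set g3 : ℝ → ℝ := fun y =>
    (d y * a y ^ 2 - 3 * a y * b y * c y + 2 * b y ^ 3) / a y ^ 3 with hg3def
  set g4 : ℝ → ℝ := fun y =>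
    (e y * a y ^ 3 - 4 * a y ^ 2 * b y * d y - 3 * a y ^ 2 * c y ^ 2
      + 12 * a y * b y ^ 2 * c y - 6 * b y ^ 4) / a y ^ 4 with hg4def
  have hF1 : ∀ y, HasDerivAt F (g1 y) y := fun y => (hda y).log (hne y)
  have hF1fun : deriv F = g1 := funext fun y => (hF1 y).deriv
  have hg1' : ∀ y, HasDerivAt g1 (g2 y) y := fun y => (hdb y).div (hda y) (hne y)
  have hF2 : ∀ y, iteratedDeriv 2 F y = g2 y := by
    intro y
    rw [iteratedDeriv_succ, iteratedDeriv_one, hF1fun]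
    exact (hg1' y).deriv
  have hg2' : ∀ y, HasDerivAt g2 (g3 y) y := by
    intro y
    have h := (((hdc y).mul (hda y)).sub ((hdb y).mul (hdb y))).div
      ((hda y).pow 2) (pow_ne_zero 2 (hne y))
    convert h using 1
    · rfl
    · rfl
    · rfl
    simp only [hg3def, Pi.pow_apply, Pi.mul_apply, Pi.sub_apply]
    rw [div_eq_div_iff (pow_ne_zero _ (hne y)) (pow_ne_zero _ (pow_ne_zero _ (hne y)))]
    push_cast
    ring
  have hF3 : ∀ y, iteratedDeriv 3 F y = g3 y := by
    intro y
    rw [iteratedDeriv_succ, funext hF2]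
    exact (hg2' y).deriv
  have hg3' : ∀ y, HasDerivAt g3 (g4 y) y := by
    intro y
    have hnum : HasDerivAt (fun y => d y * a y ^ 2 - 3 * a y * b y * c y + 2 * b y ^ 3)
        (e y * a y ^ 2 + d y * (2 * a y ^ 1 * b y)
          - ((3 * b y * b y + 3 * a y * c y) * c y + 3 * a y * b y * d y)
          + 2 * (3 * b y ^ 2 * c y)) y := by
      have h1 := (hdd' y).mul ((hda y).pow 2)
      have h2 := (((hda y).const_mul 3).mul (hdb y)).mul (hdc y)
      have h3 := ((hdb y).pow 3).const_mul 2
      have h := (h1.sub h2).add h3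
      convert h using 1
      · rfl
      · rfl
      · rfl
      simp only [Pi.pow_apply, Pi.mul_apply]
      push_cast
      ring
    have h := hnum.div ((hda y).pow 3) (pow_ne_zero 3 (hne y))
    convert h using 1
    · rfl
    · rfl
    · rfl
    simp only [hg4def, Pi.pow_apply]
    rw [div_eq_div_iff (pow_ne_zero _ (hne y)) (pow_ne_zero _ (pow_ne_zero _ (hne y)))]
    push_cast
    ring
  have hF4 : iteratedDeriv 4 F x = g4 x := by
    rw [iteratedDeriv_succ, funext hF3]
    exact (hg3' x).deriv
  have hderiv : deriv a x = b x := by rw [hb, iteratedDeriv_one]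
  rw [hF4, hF2 x, hderiv]
  have h0 := hne x
  simp only [hg4def, hg2def]
  field_simp
  ring
end

section
/- Let f : ℝ → ℝ be smooth and everywhere positive, and let F = log f. Then f·f⁽⁶⁾ − 6 f'·f⁽⁵⁾ + 15 f''·f⁽⁴⁾ − 10 (f''')² = f²·(F⁽⁶⁾ + 30 F⁽⁴⁾·F'' + 60 (F'')³). -/
lemma hirota_aux (c a1 a2 a3 a4 a5 a6 : ℝ) (hc : c ≠ 0) :
    c * a6 - 6 * a1 * a5 + 15 * a2 * a4 - 10 * a3 ^ 2 =
      c ^ 2 *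
        ((a6 / c - 6 * (a1 / c) * (a5 / c) - 15 * (a2 / c) * (a4 / c)
            + 30 * (a1 / c) ^ 2 * (a4 / c) - 10 * (a3 / c) ^ 2
            + 120 * (a1 / c) * (a2 / c) * (a3 / c) - 120 * (a1 / c) ^ 3 * (a3 / c)
            + 30 * (a2 / c) ^ 3 - 270 * (a1 / c) ^ 2 * (a2 / c) ^ 2
            + 360 * (a1 / c) ^ 4 * (a2 / c) - 120 * (a1 / c) ^ 6)
          + 30 * (a4 / c - 4 * (a1 / c) * (a3 / c) - 3 * (a2 / c) ^ 2
              + 12 * (a1 / c) ^ 2 * (a2 / c) - 6 * (a1 / c) ^ 4)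
              * (a2 / c - (a1 / c) ^ 2)
          + 60 * (a2 / c - (a1 / c) ^ 2) ^ 3) := by
  field_simp
  ring

set_option maxHeartbeats 1600000 in
/-- Sixth-order Hirota-to-logarithmic conversion: for smooth positive `f` and
`F = log f`, one has
`f * f⁽⁶⁾ - 6 f' * f⁽⁵⁾ + 15 f'' * f⁽⁴⁾ - 10 (f''')^2
  = f^2 * (F⁽⁶⁾ + 30 F⁽⁴⁾ * F'' + 60 (F'')^3)`. -/
theorem hirota_log_sixth_order (f : ℝ → ℝ) (hf : ContDiff ℝ (⊤ : ℕ∞) f)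
    (hpos : ∀ x, 0 < f x) :
    ∀ x : ℝ,
      f x * iteratedDeriv 6 f x - 6 * deriv f x * iteratedDeriv 5 f x
          + 15 * iteratedDeriv 2 f x * iteratedDeriv 4 f x
          - 10 * (iteratedDeriv 3 f x) ^ 2 =
        (f x) ^ 2 *
          (iteratedDeriv 6 (fun y => Real.log (f y)) x
            + 30 * iteratedDeriv 4 (fun y => Real.log (f y)) x
                * iteratedDeriv 2 (fun y => Real.log (f y)) x
            + 60 * (iteratedDeriv 2 (fun y => Real.log (f y)) x) ^ 3) := by
  have hne : ∀ x, f x ≠ 0 := fun x => (hpos x).ne'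
  have hD : ∀ (n : ℕ) (x : ℝ),
      HasDerivAt (iteratedDeriv n f) (iteratedDeriv (n + 1) f x) x := by
    intro n x
    rw [iteratedDeriv_succ]
    exact ((hf.differentiable_iteratedDeriv n
      (by exact_mod_cast lt_top_iff_ne_top.2 (by simp))) x).hasDerivAt
  have hfd : ∀ x, HasDerivAt f (deriv f x) x :=
    fun x => ((hf.differentiable (by simp)) x).hasDerivAt
  set U : ℕ → ℝ → ℝ := fun k x => iteratedDeriv k f x / f x with hUdef
  have hU : ∀ (k : ℕ) (x : ℝ),
      HasDerivAt (U k) (U (k + 1) x - U k x * U 1 x) x := by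
    intro k x
    have h := (hD k x).div (hfd x) (hne x)
    have heq : (iteratedDeriv (k + 1) f x * f x - iteratedDeriv k f x * deriv f x) / f x ^ 2
        = U (k + 1) x - U k x * U 1 x := by
      simp only [hUdef, iteratedDeriv_one]
      field_simp [hne x]
    exact heq ▸ h
  set L : ℝ → ℝ := fun y => Real.log (f y) with hLdef
  have hL1 : deriv L = U 1 := by
    funext x
    have h : HasDerivAt L (deriv f x / f x) x := (hfd x).log (hne x)
    rw [h.deriv, hUdef]
    simp [iteratedDeriv_one]
  -- derivative computations for U-polynomials
  have e2 : ∀ x, HasDerivAt (U 1) (U 2 x - U 1 x ^ 2) x := by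
    intro x
    have h := hU 1 x
    convert h using 1
    simp only [Nat.reduceAdd]; ring
  have e3 : ∀ x, HasDerivAt (fun x => U 2 x - U 1 x ^ 2)
      (U 3 x - 3 * U 1 x * U 2 x + 2 * U 1 x ^ 3) x := by
    intro x
    have h := (hU 2 x).sub ((hU 1 x).pow 2)
    refine h.congr_deriv ?_
    simp only [Nat.reduceAdd]; push_cast; ring
  have e4 : ∀ x, HasDerivAt (fun x => U 3 x - 3 * U 1 x * U 2 x + 2 * U 1 x ^ 3)
      (U 4 x - 4 * U 1 x * U 3 x - 3 * U 2 x ^ 2 + 12 * U 1 x ^ 2 * U 2 x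
        - 6 * U 1 x ^ 4) x := by
    intro x
    have h := ((hU 3 x).sub
        (((hasDerivAt_const x (3:ℝ)).mul (hU 1 x)).mul (hU 2 x))).add
      ((hasDerivAt_const x (2:ℝ)).mul ((hU 1 x).pow 3))
    refine h.congr_deriv ?_
    simp only [Nat.reduceAdd, Pi.mul_apply, Pi.pow_apply]; push_cast; ring
  have e5 : ∀ x, HasDerivAt (fun x => U 4 x - 4 * U 1 x * U 3 x - 3 * U 2 x ^ 2
        + 12 * U 1 x ^ 2 * U 2 x - 6 * U 1 x ^ 4)
      (U 5 x - 5 * U 1 x * U 4 x - 10 * U 2 x * U 3 x + 20 * U 1 x ^ 2 * U 3 x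
        + 30 * U 1 x * U 2 x ^ 2 - 60 * U 1 x ^ 3 * U 2 x + 24 * U 1 x ^ 5) x := by
    intro x
    have h := (((((hU 4 x).sub
        (((hasDerivAt_const x (4:ℝ)).mul (hU 1 x)).mul (hU 3 x))).sub
        ((hasDerivAt_const x (3:ℝ)).mul ((hU 2 x).pow 2))).add
        (((hasDerivAt_const x (12:ℝ)).mul ((hU 1 x).pow 2)).mul (hU 2 x))).sub
      ((hasDerivAt_const x (6:ℝ)).mul ((hU 1 x).pow 4)))
    refine h.congr_deriv ?_
    simp only [Nat.reduceAdd, Pi.mul_apply, Pi.pow_apply]; push_cast; ring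
  have e6 : ∀ x, HasDerivAt (fun x => U 5 x - 5 * U 1 x * U 4 x - 10 * U 2 x * U 3 x
        + 20 * U 1 x ^ 2 * U 3 x + 30 * U 1 x * U 2 x ^ 2 - 60 * U 1 x ^ 3 * U 2 x
        + 24 * U 1 x ^ 5)
      (U 6 x - 6 * U 1 x * U 5 x - 15 * U 2 x * U 4 x + 30 * U 1 x ^ 2 * U 4 x
        - 10 * U 3 x ^ 2 + 120 * U 1 x * U 2 x * U 3 x - 120 * U 1 x ^ 3 * U 3 x
        + 30 * U 2 x ^ 3 - 270 * U 1 x ^ 2 * U 2 x ^ 2 + 360 * U 1 x ^ 4 * U 2 x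
        - 120 * U 1 x ^ 6) x := by
    intro x
    have h := ((((((hU 5 x).sub
        (((hasDerivAt_const x (5:ℝ)).mul (hU 1 x)).mul (hU 4 x))).sub
        (((hasDerivAt_const x (10:ℝ)).mul (hU 2 x)).mul (hU 3 x))).add
        (((hasDerivAt_const x (20:ℝ)).mul ((hU 1 x).pow 2)).mul (hU 3 x))).add
        (((hasDerivAt_const x (30:ℝ)).mul (hU 1 x)).mul ((hU 2 x).pow 2))).sub
        (((hasDerivAt_const x (60:ℝ)).mul ((hU 1 x).pow 3)).mul (hU 2 x))).add
      ((hasDerivAt_const x (24:ℝ)).mul ((hU 1 x).pow 5))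
    refine h.congr_deriv ?_
    simp only [Nat.reduceAdd, Pi.mul_apply, Pi.pow_apply]; push_cast; ring
  -- iterated derivatives of L
  have i2 : iteratedDeriv 2 L = fun x => U 2 x - U 1 x ^ 2 := by
    rw [show iteratedDeriv 2 L = deriv (iteratedDeriv 1 L) from iteratedDeriv_succ, iteratedDeriv_one, hL1]
    funext x; exact (e2 x).deriv
  have i3 : iteratedDeriv 3 L = fun x => U 3 x - 3 * U 1 x * U 2 x + 2 * U 1 x ^ 3 := by
    rw [show iteratedDeriv 3 L = deriv (iteratedDeriv 2 L) from iteratedDeriv_succ, i2]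
    funext x; exact (e3 x).deriv
  have i4 : iteratedDeriv 4 L = fun x => U 4 x - 4 * U 1 x * U 3 x - 3 * U 2 x ^ 2
      + 12 * U 1 x ^ 2 * U 2 x - 6 * U 1 x ^ 4 := by
    rw [show iteratedDeriv 4 L = deriv (iteratedDeriv 3 L) from iteratedDeriv_succ, i3]
    funext x; exact (e4 x).deriv
  have i5 : iteratedDeriv 5 L = fun x => U 5 x - 5 * U 1 x * U 4 x - 10 * U 2 x * U 3 x
      + 20 * U 1 x ^ 2 * U 3 x + 30 * U 1 x * U 2 x ^ 2 - 60 * U 1 x ^ 3 * U 2 x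
      + 24 * U 1 x ^ 5 := by
    rw [show iteratedDeriv 5 L = deriv (iteratedDeriv 4 L) from iteratedDeriv_succ, i4]
    funext x; exact (e5 x).deriv
  have i6 : iteratedDeriv 6 L = fun x => U 6 x - 6 * U 1 x * U 5 x - 15 * U 2 x * U 4 x
      + 30 * U 1 x ^ 2 * U 4 x - 10 * U 3 x ^ 2 + 120 * U 1 x * U 2 x * U 3 x
      - 120 * U 1 x ^ 3 * U 3 x + 30 * U 2 x ^ 3 - 270 * U 1 x ^ 2 * U 2 x ^ 2
      + 360 * U 1 x ^ 4 * U 2 x - 120 * U 1 x ^ 6 := by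
    rw [show iteratedDeriv 6 L = deriv (iteratedDeriv 5 L) from iteratedDeriv_succ, i5]
    funext x; exact (e6 x).deriv
  intro x
  have hone : deriv f x = iteratedDeriv 1 f x := by rw [iteratedDeriv_one]
  rw [i2, i4, i6, hone]
  simp only [hUdef]
  exact hirota_aux (f x) (iteratedDeriv 1 f x) (iteratedDeriv 2 f x) (iteratedDeriv 3 f x)
    (iteratedDeriv 4 f x) (iteratedDeriv 5 f x) (iteratedDeriv 6 f x) (hne x)
end

section
/- Let f ∈ ℚ[u, z] be a polynomial in two variables, and let m be a natural number. Then the coefficient of r^m in the polynomial f(zr, ur+2) + f(zr, ur−2) − 2 f(zr, ur) (viewed as a polynomial in r with coefficients in ℚ[u,z]) equals ∑_{k ≥ m+2, k ≡ m (mod 2)} 2^{1+k−m} ∑_{p+j=k} C(p, m−j) · u^{m−j} z^j · c_{p,j}, where c_{p,j} is the coefficient of u^p z^j in f(z, u), and C(p, m−j) = 0 when m − j < 0 or m − j > p. -/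
/-!
Put `g(u, z) = f(z, u) = ∑ c_{p,j} u^p z^j`. Then the expression is
`∑ c_{p,j} (zr)^j Δ_p(ur)` with `Δ_p(t) = (t + 2)^p + (t - 2)^p - 2 t^p`, and by the binomial
theorem the `t^e`-coefficient of `Δ_p` is `C(p, e) (2^(p-e) + (-2)^(p-e) - 2 0^(p-e))`, i.e.
`C(p, e) 2^(p-e+1)` when `p - e ≥ 2` is even and `0` otherwise. The coefficient of `r^m` forces
`e = m - j`, and grouping the monomials of `g` by total degree `k = p + j ≤ deg f` gives the sum.
-/

open Finset

def secondDiffCoeff (n : ℕ) : ℕ := if 2 ≤ n ∧ Even n then 2 ^ (n + 1) else 0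

theorem two_pow_add_neg_two_pow_sub_two_mul_zero_pow {S : Type*} [CommRing S] (n : ℕ) :
    (2 : S) ^ n + (-2) ^ n - 2 * 0 ^ n = secondDiffCoeff n := by
  unfold secondDiffCoeff
  rcases n.even_or_odd with hn | hn
  · rcases Nat.lt_or_ge n 2 with hlt | hle
    · obtain rfl : n = 0 := by rcases hn with ⟨t, ht⟩; omega
      norm_num
    · rw [hn.neg_pow, zero_pow (by omega), if_pos ⟨hle, hn⟩]
      push_cast
      ring
  · rw [hn.neg_pow, zero_pow (by rintro rfl; simp at hn),
      if_neg fun h => Nat.not_even_iff_odd.mpr hn h.2]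
    simp

namespace Polynomial

variable {S : Type*} [CommRing S]

theorem coeff_C_mul_X_add_C_pow (a b : S) (n k : ℕ) :
    ((C a * X + C b) ^ n).coeff k = n.choose k * a ^ k * b ^ (n - k) := by
  have hterm : ∀ i, (C a * X) ^ i * C b ^ (n - i) * (n.choose i : S[X]) =
      C (n.choose i * a ^ i * b ^ (n - i)) * X ^ i := by
    intro i
    simp only [mul_pow, ← C_pow, ← C_eq_natCast, C_mul]
    ring
  simp only [add_pow, hterm, finsetSum_coeff, coeff_C_mul_X_pow, sum_ite_eq, mem_range]
  split_ifs with hk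
  · rfl
  · simp [Nat.choose_eq_zero_of_lt (by omega : n < k)]

theorem coeff_secondDiff_C_mul_X_pow (u : S) (n k : ℕ) :
    ((C u * X + 2) ^ n + (C u * X - 2) ^ n - 2 * (C u * X) ^ n).coeff k =
      n.choose k * secondDiffCoeff (n - k) * u ^ k := by
  have hplus := coeff_C_mul_X_add_C_pow u 2 n k
  have hminus := coeff_C_mul_X_add_C_pow u (-2) n k
  have hzero := coeff_C_mul_X_add_C_pow u 0 n k
  rw [C_ofNat] at hplus
  rw [C_neg, C_ofNat, ← sub_eq_add_neg] at hminus
  rw [C_0, add_zero] at hzero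
  rw [coeff_sub, coeff_add, coeff_ofNat_mul, hplus, hminus, hzero,
    ← two_pow_add_neg_two_pow_sub_two_mul_zero_pow]
  ring

theorem coeff_C_mul_X_pow_mul_secondDiff (u z : S) (n j m : ℕ) :
    ((C z * X) ^ j * ((C u * X + 2) ^ n + (C u * X - 2) ^ n - 2 * (C u * X) ^ n)).coeff m =
      if j ≤ m then n.choose (m - j) * secondDiffCoeff (n - (m - j)) * u ^ (m - j) * z ^ j
      else 0 := by
  rw [mul_pow, ← C_pow, mul_assoc, coeff_C_mul, coeff_X_pow_mul', coeff_secondDiff_C_mul_X_pow]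
  split_ifs <;> ring

end Polynomial

theorem Finsupp.single_zero_add_single_one_fin_two {M : Type*} [AddZeroClass M]
    (d : Fin 2 →₀ M) : single 0 (d 0) + single 1 (d 1) = d := by
  ext i
  fin_cases i <;> simp

theorem Finset.sum_fin_two_finsupp_eq_sum_range_antidiagonal {M : Type*} [AddCommMonoid M]
    {s : Finset (Fin 2 →₀ ℕ)} {N : ℕ} (hs : ∀ d ∈ s, d 0 + d 1 ≤ N)
    {G : (Fin 2 →₀ ℕ) → M} (hG : ∀ d ∉ s, G d = 0) :
    ∑ d ∈ s, G d = ∑ k ∈ range (N + 1), ∑ x ∈ antidiagonal k,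
      G (Finsupp.single 0 x.1 + Finsupp.single 1 x.2) := by
  rw [sum_sigma']
  refine sum_bij_ne_zero (fun d _ _ => ⟨d 0 + d 1, (d 0, d 1)⟩) ?_ ?_ ?_ ?_
  · intro d hd _
    simpa [Nat.lt_succ_iff] using hs d hd
  · intro d _ _ d' _ _ h
    exact Finsupp.ext <| Fin.forall_fin_two.mpr
      ⟨congrArg (fun x => x.2.1) h, congrArg (fun x => x.2.2) h⟩
  · rintro ⟨k, p, j⟩ hx hne
    rw [mem_sigma, HasAntidiagonal.mem_antidiagonal] at hx
    refine ⟨_, not_imp_comm.mp (hG _) hne, hne, ?_⟩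
    simp [hx.2]
  · intro d _ _
    rw [d.single_zero_add_single_one_fin_two]

namespace MvPolynomial

variable {R : Type*} [CommSemiring R]

theorem add_le_totalDegree_of_mem_support {g : MvPolynomial (Fin 2) R} {d : Fin 2 →₀ ℕ}
    (hd : d ∈ g.support) : d 0 + d 1 ≤ g.totalDegree := by
  simpa [Finsupp.sum_fintype, Fin.sum_univ_two] using le_totalDegree hd

theorem aeval_eq_aeval_rename_swap {A : Type*} [CommSemiring A] [Algebra R A]
    (f : MvPolynomial (Fin 2) R) (a b : A) :
    aeval ![a, b] f = aeval ![b, a] (rename (Equiv.swap 0 1) f) := by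
  rw [aeval_rename]
  congr
  funext i
  fin_cases i <;> rfl

theorem aeval_X_one_X_zero (f : MvPolynomial (Fin 2) R) :
    aeval ![X 1, X 0] f = rename (Equiv.swap 0 1) f := by
  rw [rename_eq_aeval]
  congr
  funext i
  fin_cases i <;> rfl

end MvPolynomial

open Polynomial in
theorem coeff_aeval_secondDiff {K S : Type*} [CommSemiring K] [CommRing S] [Algebra K S]
    (g : MvPolynomial (Fin 2) K) (u z : S) (m : ℕ) :
    (MvPolynomial.aeval ![C u * X + 2, C z * X] g + MvPolynomial.aeval ![C u * X - 2, C z * X] g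
        - 2 * MvPolynomial.aeval ![C u * X, C z * X] g).coeff m =
      ∑ d ∈ g.support, algebraMap K S (g.coeff d) *
        if d 1 ≤ m then
          (d 0).choose (m - d 1) * secondDiffCoeff (d 0 - (m - d 1)) * u ^ (m - d 1) * z ^ d 1
        else 0 := by
  simp only [MvPolynomial.aeval_def, MvPolynomial.eval₂_eq', Fin.prod_univ_two,
    Matrix.cons_val_zero, Matrix.cons_val_one]
  rw [← sum_add_distrib, mul_sum, ← sum_sub_distrib, finsetSum_coeff]
  refine sum_congr rfl fun d _ => ?_
  rw [← coeff_C_mul_X_pow_mul_secondDiff, ← coeff_C_mul, Polynomial.algebraMap_apply]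
  congr 1
  ring

theorem ite_two_pow_mul_choose_eq_algebraMap_mul_secondDiffCoeff {K S : Type*}
    [CommSemiring K] [CommRing S] [Algebra K S] (c : K) (u z : S) (p j m : ℕ) :
    (if m + 2 ≤ p + j ∧ Even (p + j - m) then
        if j ≤ m then
          algebraMap K S (2 ^ (1 + (p + j) - m) * (p.choose (m - j) : K) * c)
            * u ^ (m - j) * z ^ j
        else 0
      else 0) =
      algebraMap K S c *
        if j ≤ m then p.choose (m - j) * secondDiffCoeff (p - (m - j)) * u ^ (m - j) * z ^ j
        else 0 := by
  by_cases hj : j ≤ m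
  · have hiff : 2 ≤ p + j - m ↔ m + 2 ≤ p + j := by omega
    rw [if_pos hj, if_pos hj, show p - (m - j) = p + j - m by omega, secondDiffCoeff]
    simp only [hiff]
    split_ifs with h
    · rw [show 1 + (p + j) - m = p + j - m + 1 by omega]
      push_cast [map_mul, map_pow, map_ofNat, map_natCast]
      ring
    · simp
  · simp [hj]

/-- Here `u = X 0` and `z = X 1`, and the sum over `k` is truncated at the total degree of `f`,
beyond which all `c_{p,j}` vanish. -/
theorem coeff_extraction_shifted_maps (f : MvPolynomial (Fin 2) ℚ) (m : ℕ) :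
    (Polynomial.coeff
        (MvPolynomial.aeval
            ![Polynomial.C (MvPolynomial.X 1) * Polynomial.X,
              Polynomial.C (MvPolynomial.X 0) * Polynomial.X + 2] f
          + MvPolynomial.aeval
            ![Polynomial.C (MvPolynomial.X 1) * Polynomial.X,
              Polynomial.C (MvPolynomial.X 0) * Polynomial.X - 2] f
          - 2 * MvPolynomial.aeval
            ![Polynomial.C (MvPolynomial.X 1) * Polynomial.X,
              Polynomial.C (MvPolynomial.X 0) * Polynomial.X] f) m) =
      ∑ k ∈ Finset.range (f.totalDegree + 1),
        if m + 2 ≤ k ∧ Even (k - m) then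
          ∑ pj ∈ Finset.HasAntidiagonal.antidiagonal k,
            if pj.2 ≤ m then
              MvPolynomial.C
                  ((2 : ℚ) ^ (1 + k - m) * (pj.1.choose (m - pj.2) : ℚ) *
                    MvPolynomial.coeff
                      (Finsupp.single (0 : Fin 2) pj.1 +
                        Finsupp.single (1 : Fin 2) pj.2)
                      (MvPolynomial.aeval
                        ![MvPolynomial.X 1, MvPolynomial.X 0] f))
                * MvPolynomial.X 0 ^ (m - pj.2) * MvPolynomial.X 1 ^ pj.2
            else 0
        else 0 := by
  set g := MvPolynomial.rename (Equiv.swap 0 1) f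
  have hs (d) (hd : d ∈ g.support) : d 0 + d 1 ≤ f.totalDegree :=
    (MvPolynomial.add_le_totalDegree_of_mem_support hd).trans
      (MvPolynomial.totalDegree_rename_le _ f)
  rw [MvPolynomial.aeval_X_one_X_zero, MvPolynomial.aeval_eq_aeval_rename_swap f,
    MvPolynomial.aeval_eq_aeval_rename_swap f, MvPolynomial.aeval_eq_aeval_rename_swap f,
    coeff_aeval_secondDiff, sum_fin_two_finsupp_eq_sum_range_antidiagonal hs fun d hd => by
      rw [MvPolynomial.notMem_support_iff.mp hd, map_zero, zero_mul]]
  refine sum_congr rfl fun k _ => ?_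
  rw [ite_sum_zero]
  refine sum_congr rfl fun ⟨p, j⟩ hx => ?_
  rw [HasAntidiagonal.mem_antidiagonal] at hx
  subst hx
  have hp : (Finsupp.single 0 p + Finsupp.single 1 j : Fin 2 →₀ ℕ) 0 = p := by simp
  have hj : (Finsupp.single 0 p + Finsupp.single 1 j : Fin 2 →₀ ℕ) 1 = j := by simp
  rw [hp, hj, ← MvPolynomial.algebraMap_eq]
  exact (ite_two_pow_mul_choose_eq_algebraMap_mul_secondDiffCoeff _ _ _ p j m).symm
end
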